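/- arXiv:2407.20002 — 5 statements merged into one kernel-verified Lean document; each statement's English description precedes it below -/
import Mathlib

section
/- In an IDF algebra, |x| is the largest duplicable state below x: that is, |x| = |x| ⊕ |x|, x ⪰ |x|, and for every c with c = c ⊕ c and x ⪰ c, we have |x| ⪰ c. -/
/-- An IDF algebra: a partial commutative monoid with core, stability predicate
and stabilization, satisfying the axioms of Dardinier et al.
Partiality of `⊕` is modeled via `Option`; `op a b = some c` asserts that
`a ⊕ b` is defined and equals `c`. -/
structure IDF (α : Type) where
  op : α → α → Option α
  core : α → α
  stable : α → Prop
  stabilize : α → α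
  comm : ∀ a b, op a b = op b a
  assoc : ∀ a b c, (op a b).bind (fun x => op x c) = (op b c).bind (fun y => op a y)
  positivity : ∀ a b c, op a b = some c → op c c = some c → op a a = some a
  core_self : ∀ x, op x (core x) = some x
  core_dup : ∀ x, op (core x) (core x) = some (core x)
  core_max : ∀ x c, op x c = some x → ∃ r, op c r = some (core x)
  core_add : ∀ a b c, op a b = some c → op (core a) (core b) = some (core c)
  cancel : ∀ x a b w, op x a = some w → op x b = some w → core a = core b → a = b
  stable_stabilize : ∀ ω, stable ω → stabilize ω = ω
  stabilize_stable : ∀ ω, stable (stabilize ω)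
  stabilize_add : ∀ a b c, op a b = some c → op (stabilize a) (stabilize b) = some (stabilize c)
  stabilize_core : ∀ x, op (stabilize x) (core x) = some x
  stabilize_core_unit : ∀ a b c, op b (stabilize (core c)) = some a → a = b

namespace IDF

variable {α : Type}

/-- `Alg.ge x y` means `x ⪰ y`, i.e. `∃ r, x = y ⊕ r`. -/
def ge (Alg : IDF α) (x y : α) : Prop := ∃ r, Alg.op y r = some x

/-- Separating conjunction of (semantic) assertions. -/
def star (Alg : IDF α) (P Q : Set α) : Set α :=
  {ω | ∃ p ∈ P, ∃ q ∈ Q, Alg.op p q = some ω}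

/-- `P` is self-framing. -/
def selfFraming (Alg : IDF α) (P : Set α) : Prop :=
  ∀ ω, ω ∈ P ↔ Alg.stabilize ω ∈ P

/-- The state `ω` frames the assertion `P`. -/
def framesState (Alg : IDF α) (ω : α) (P : Set α) : Prop :=
  Alg.selfFraming (Alg.star {ω} P)

/-- The assertion `B` frames the assertion `P`: every stable state of `B` frames `P`. -/
def framesAssert (Alg : IDF α) (B P : Set α) : Prop :=
  ∀ ω ∈ B, Alg.stable ω → Alg.framesState ω P

end IDF

/-! A duplicable `c` below `x` is absorbed by `x`: from `x = c ⊕ r` we get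
`x ⊕ c = c ⊕ c ⊕ r = c ⊕ r = x`, and the maximality axiom of the core then gives `|x| ⪰ c`. -/

namespace IDF

variable {α : Type} (Alg : IDF α)

theorem op_assoc_of_eq_some {a b c d e : α} (hab : Alg.op a b = some d)
    (hbc : Alg.op b c = some e) : Alg.op d c = Alg.op a e := by
  simpa only [hab, hbc, Option.bind_some] using Alg.assoc a b c

theorem ge_core (x : α) : Alg.ge x (Alg.core x) :=
  ⟨x, (Alg.comm _ _).trans (Alg.core_self x)⟩

theorem op_eq_self_of_ge_of_dup {x c : α} (hdup : Alg.op c c = some c) (hxc : Alg.ge x c) :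
    Alg.op x c = some x := by
  obtain ⟨r, hr⟩ := hxc
  calc Alg.op x c = Alg.op c x := Alg.comm x c
    _ = Alg.op c r := (Alg.op_assoc_of_eq_some hdup hr).symm
    _ = some x := hr

end IDF

/-- `|x|` is the largest duplicable state below `x`. -/
theorem idf_core_largest_duplicable {α : Type} (Alg : IDF α) (x : α) :
    Alg.op (Alg.core x) (Alg.core x) = some (Alg.core x) ∧
    Alg.ge x (Alg.core x) ∧
    (∀ c, Alg.op c c = some c → Alg.ge x c → Alg.ge (Alg.core x) c) :=
  ⟨Alg.core_dup x, Alg.ge_core x,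
    fun c hdup hxc => Alg.core_max x c (Alg.op_eq_self_of_ge_of_dup hdup hxc)⟩
end

section
/- In an IDF algebra, stabilize(x) is the largest stable state below x: stable(stabilize(x)), x ⪰ stabilize(x), and for every stable c with x ⪰ c we have stabilize(x) ⪰ c. -/
/-- `stabilize(x)` is the largest stable state below `x`. -/
theorem idf_stabilize_largest_stable {α : Type} (Alg : IDF α) (x : α) :
    Alg.stable (Alg.stabilize x) ∧
    Alg.ge x (Alg.stabilize x) ∧
    (∀ c, Alg.stable c → Alg.ge x c → Alg.ge (Alg.stabilize x) c) := by
  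
  refine ⟨Alg.stabilize_stable x, ⟨Alg.core x, Alg.stabilize_core x⟩, ?_⟩
  rintro c hc ⟨r, hr⟩
  exact ⟨Alg.stabilize r, by
    have h := Alg.stabilize_add c r x hr
    rwa [Alg.stable_stabilize c hc] at h⟩
end

section
/- The concrete IDF state model Σ_IDF, consisting of pairs (h, π) of a partial heap h : L ⇀ V and a permission map π : L → [0,1] such that π(l) > 0 implies l ∈ dom(h), with the combination (h₁,π₁) ⊕ (h₂,π₂) defined iff for all l, π₁(l) + π₂(l) ≤ 1 and (l ∈ dom(h₁) ∩ dom(h₂) ⇒ h₁(l) = h₂(l)), and equal to (h₁ ∪ h₂, π₁ + π₂) when defined; with core |(h,π)| = (h, λl. 0); with stable(h,π) ⇔ dom(h) = {l | π(l) > 0}; and with stabilize(h,π) = ((λl. if π(l) > 0 then h(l) else ⊥), π); forms an IDF algebra, i.e., satisfies all IDF algebra axioms. -/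
/-! The concrete IDF state model `Σ_IDF`: partial heaps with fractional
permissions in `[0,1]`, where nonzero permission implies a value exists. -/

/-- A state of `Σ_IDF`: a partial heap `h : L ⇀ V` and a permission map
`π : L → [0,1]` with `π(l) > 0 → l ∈ dom(h)`. -/
structure IDFState (L V : Type) where
  h : L → Option V
  π : L → ℝ
  nonneg : ∀ l, 0 ≤ π l
  le_one : ∀ l, π l ≤ 1
  inv : ∀ l, 0 < π l → (h l).isSome

namespace IDFState

variable {L V : Type}

open Classical

/-- Combination on `Σ_IDF`: defined iff permissions sum to at most 1 and the
heaps agree on their common domain; the result is the union of heaps and the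
sum of permissions. -/
noncomputable def idfOp (s1 s2 : IDFState L V) : Option (IDFState L V) :=
  if hc : (∀ l, s1.π l + s2.π l ≤ 1) ∧
          (∀ l, (s1.h l).isSome → (s2.h l).isSome → s1.h l = s2.h l) then
    some { h := fun l => (s1.h l).or (s2.h l)
           π := fun l => s1.π l + s2.π l
           nonneg := fun l => add_nonneg (s1.nonneg l) (s2.nonneg l)
           le_one := fun l => hc.1 l
           inv := by
             intro l hl
             have hl' : 0 < s1.π l + s2.π l := hl
             rcases lt_or_ge 0 (s1.π l) with h1 | h1
             · have hs := s1.inv l h1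
               cases e : s1.h l with
               | none => rw [e] at hs; simp at hs
               | some v => simp [Option.or, e]
             · have h2 : 0 < s2.π l := by linarith
               have hs := s2.inv l h2
               cases e : s1.h l with
               | none => simpa [Option.or, e] using hs
               | some v => simp [Option.or, e] }
  else none

/-- Core: keep the heap, zero all permissions. -/
def idfCore (s : IDFState L V) : IDFState L V :=
  { h := s.h
    π := fun _ => 0
    nonneg := fun _ => le_refl 0
    le_one := fun _ => zero_le_one
    inv := fun _ hl => absurd hl (lt_irrefl 0) }

/-- Stability: the heap has a value exactly at locations with nonzero
permission. -/
def idfStable (s : IDFState L V) : Prop :=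
  ∀ l, (s.h l).isSome ↔ 0 < s.π l

/-- Stabilization: erase heap values at locations with zero permission. -/
noncomputable def idfStabilize (s : IDFState L V) : IDFState L V :=
  { h := fun l => if 0 < s.π l then s.h l else none
    π := s.π
    nonneg := s.nonneg
    le_one := s.le_one
    inv := by intro l hl; simpa [hl] using s.inv l hl }

end IDFState

/-!
A combination is defined exactly when the permissions add up to at most one and the heaps agree
wherever both are defined, and it is then computed location by location. So every axiom reduces
to a pointwise fact about `Option.or` on agreeing values plus linear arithmetic on permissions.
The core has zero permission, and a zero-permission state whose heap is contained in that of `s`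
is a unit for `s`; this gives positivity, the core axioms and the unit law for
`stabilize (core c)`. Associativity holds because a defined triple sum is the same as three
pairwise agreeing states with total permission at most one, a description invariant under
rotation.
-/

namespace Option

variable {α : Type*}

def Agree (o₁ o₂ : Option α) : Prop := o₁.isSome → o₂.isSome → o₁ = o₂

variable {o₁ o₂ o₃ : Option α}

theorem Agree.symm (h : Agree o₁ o₂) : Agree o₂ o₁ := fun h₂ h₁ => (h h₁ h₂).symm

theorem Agree.or_comm (h : Agree o₁ o₂) : o₁.or o₂ = o₂.or o₁ := by
  cases o₁ <;> cases o₂ <;> simp_all [Agree]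

theorem Agree.or_eq_right (h : Agree o₁ o₂) (h₂ : o₂.isSome) : o₁.or o₂ = o₂ := by
  cases o₁ <;> cases o₂ <;> simp_all [Agree]

theorem Agree.or_left_iff (h : Agree o₁ o₂) :
    Agree (o₁.or o₂) o₃ ↔ Agree o₁ o₃ ∧ Agree o₂ o₃ := by
  cases o₁ <;> cases o₂ <;> cases o₃ <;> simp_all [Agree]

theorem or_rotate_of_agree (h₁₂ : Agree o₁ o₂) (h₁₃ : Agree o₁ o₃) (h₂₃ : Agree o₂ o₃) :
    (o₁.or o₂).or o₃ = (o₂.or o₃).or o₁ := by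
  rw [Option.or_assoc]
  exact ((h₂₃.or_left_iff).mpr ⟨h₁₂.symm, h₁₃.symm⟩).symm.or_comm

end Option

namespace IDFState

variable {L V : Type}

theorem ext {s t : IDFState L V} (hh : s.h = t.h) (hπ : s.π = t.π) : s = t := by
  cases s; cases t; cases hh; cases hπ; rfl

theorem idfOp_eq_some_iff {s₁ s₂ s : IDFState L V} :
    idfOp s₁ s₂ = some s ↔
      (∀ l, s₁.π l + s₂.π l ≤ 1) ∧ (∀ l, (s₁.h l).Agree (s₂.h l)) ∧
        (∀ l, s.h l = (s₁.h l).or (s₂.h l)) ∧ ∀ l, s.π l = s₁.π l + s₂.π l := by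
  unfold idfOp
  split_ifs with hc
  · rw [Option.some_inj]
    constructor
    · rintro rfl
      exact ⟨hc.1, hc.2, fun _ => rfl, fun _ => rfl⟩
    · rintro ⟨-, -, hh, hπ⟩
      exact ext (funext hh).symm (funext hπ).symm
  · simp only [false_iff, not_and]
    exact fun h₁ h₂ _ _ => hc ⟨h₁, h₂⟩

theorem idfOp_isSome {a b : IDFState L V} (hπ : ∀ l, a.π l + b.π l ≤ 1)
    (hag : ∀ l, (a.h l).Agree (b.h l)) : (idfOp a b).isSome := by
  unfold idfOp
  rw [dif_pos ⟨hπ, hag⟩]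
  rfl

theorem idfOp_comm (a b : IDFState L V) : idfOp a b = idfOp b a := by
  suffices h : ∀ a b s : IDFState L V, idfOp a b = some s → idfOp b a = some s from
    Option.ext fun s => ⟨h a b s, h b a s⟩
  intro a b s hs
  rw [idfOp_eq_some_iff] at hs ⊢
  obtain ⟨hπ, hag, hh, hπs⟩ := hs
  exact ⟨fun l => by linarith [hπ l], fun l => (hag l).symm,
    fun l => by rw [hh, (hag l).or_comm], fun l => by rw [hπs, add_comm]⟩

theorem idfOp_bind_eq_some_iff {a b c w : IDFState L V} :
    (idfOp a b).bind (idfOp · c) = some w ↔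
      (∀ l, a.π l + b.π l + c.π l ≤ 1) ∧
        (∀ l, (a.h l).Agree (b.h l) ∧ (a.h l).Agree (c.h l) ∧ (b.h l).Agree (c.h l)) ∧
        (∀ l, w.h l = ((a.h l).or (b.h l)).or (c.h l)) ∧
        ∀ l, w.π l = a.π l + b.π l + c.π l := by
  rw [Option.bind_eq_some_iff]
  constructor
  · rintro ⟨x, hab, hxc⟩
    rw [idfOp_eq_some_iff] at hab hxc
    obtain ⟨-, hag, hxh, hxπ⟩ := hab
    obtain ⟨hπ, hxag, hwh, hwπ⟩ := hxc
    refine ⟨fun l => hxπ l ▸ hπ l, fun l => ?_, fun l => by rw [hwh, hxh],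
      fun l => by rw [hwπ, hxπ]⟩
    have := hxag l
    rw [hxh, (hag l).or_left_iff] at this
    exact ⟨hag l, this⟩
  · rintro ⟨hπ, hag, hwh, hwπ⟩
    have hπab : ∀ l, a.π l + b.π l ≤ 1 := fun l => by linarith [hπ l, c.nonneg l]
    obtain ⟨x, hab⟩ := Option.isSome_iff_exists.mp (idfOp_isSome hπab fun l => (hag l).1)
    refine ⟨x, hab, ?_⟩
    obtain ⟨-, -, hxh, hxπ⟩ := idfOp_eq_some_iff.mp hab
    rw [idfOp_eq_some_iff]
    refine ⟨fun l => hxπ l ▸ hπ l, fun l => ?_, fun l => by rw [hwh, hxh],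
      fun l => by rw [hwπ, hxπ]⟩
    rw [hxh, (hag l).1.or_left_iff]
    exact (hag l).2

theorem idfOp_assoc (a b c : IDFState L V) :
    (idfOp a b).bind (idfOp · c) = (idfOp b c).bind (idfOp a ·) := by
  rw [show (idfOp a ·) = (idfOp · a) from funext (idfOp_comm a)]
  ext w
  rw [idfOp_bind_eq_some_iff, idfOp_bind_eq_some_iff]
  constructor
  · rintro ⟨hπ, hag, hwh, hwπ⟩
    refine ⟨fun l => by linarith [hπ l], fun l => ?_, fun l => ?_, fun l => by rw [hwπ]; ring⟩
    · obtain ⟨hab, hac, hbc⟩ := hag l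
      exact ⟨hbc, hab.symm, hac.symm⟩
    · obtain ⟨hab, hac, hbc⟩ := hag l
      rw [hwh, Option.or_rotate_of_agree hab hac hbc]
  · rintro ⟨hπ, hag, hwh, hwπ⟩
    refine ⟨fun l => by linarith [hπ l], fun l => ?_, fun l => ?_, fun l => by rw [hwπ]; ring⟩
    · obtain ⟨hbc, hba, hca⟩ := hag l
      exact ⟨hba.symm, hca.symm, hbc⟩
    · obtain ⟨hbc, hba, hca⟩ := hag l
      rw [hwh, Option.or_rotate_of_agree hbc hba hca,
        Option.or_rotate_of_agree hca hbc.symm hba.symm]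

theorem idfOp_eq_some_self_of_perm_eq_zero {s t : IDFState L V} (hπ : ∀ l, t.π l = 0)
    (hh : ∀ l, (t.h l).isSome → t.h l = s.h l) : idfOp s t = some s := by
  have hag : ∀ l, (s.h l).Agree (t.h l) := fun l _ ht => (hh l ht).symm
  rw [idfOp_eq_some_iff]
  refine ⟨fun l => by simp [hπ, s.le_one], hag, fun l => ?_, fun l => by simp [hπ]⟩
  by_cases ht : (t.h l).isSome
  · rw [(hag l).or_eq_right ht, hh l ht]
  · rw [Option.not_isSome_iff_eq_none.mp ht, Option.or_none]

theorem perm_eq_zero_of_idfOp_self {s : IDFState L V} (h : idfOp s s = some s) (l : L) :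
    s.π l = 0 := by
  linarith [(idfOp_eq_some_iff.mp h).2.2.2 l]

theorem idfOp_self_eq_some_of_summand {a b c : IDFState L V} (habc : idfOp a b = some c)
    (hc : idfOp c c = some c) : idfOp a a = some a := by
  have hπ : ∀ l, a.π l = 0 := fun l => by
    linarith [(idfOp_eq_some_iff.mp habc).2.2.2 l, perm_eq_zero_of_idfOp_self hc l,
      a.nonneg l, b.nonneg l]
  exact idfOp_eq_some_self_of_perm_eq_zero hπ fun _ _ => rfl

theorem idfOp_self_idfCore (x : IDFState L V) : idfOp x (idfCore x) = some x :=
  idfOp_eq_some_self_of_perm_eq_zero (fun _ => rfl) fun _ _ => rfl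

theorem idfOp_idfCore_idfCore (x : IDFState L V) :
    idfOp (idfCore x) (idfCore x) = some (idfCore x) :=
  idfOp_eq_some_self_of_perm_eq_zero (fun _ => rfl) fun _ _ => rfl

theorem idfOp_idfCore_of_idfOp_eq_self {x c : IDFState L V} (h : idfOp x c = some x) :
    idfOp c (idfCore x) = some (idfCore x) := by
  obtain ⟨-, hag, hh, hπ⟩ := idfOp_eq_some_iff.mp h
  rw [idfOp_comm]
  refine idfOp_eq_some_self_of_perm_eq_zero (fun l => by linarith [hπ l]) fun l hc => ?_
  exact ((hag l).or_eq_right hc).symm.trans (hh l).symm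

theorem idfOp_idfCore_eq_some {a b c : IDFState L V} (h : idfOp a b = some c) :
    idfOp (idfCore a) (idfCore b) = some (idfCore c) := by
  obtain ⟨-, hag, hh, -⟩ := idfOp_eq_some_iff.mp h
  exact idfOp_eq_some_iff.mpr ⟨fun _ => by simp [idfCore], hag, hh, fun _ => by simp [idfCore]⟩

theorem eq_of_idfOp_eq_some_of_idfCore_eq {x a b w : IDFState L V} (ha : idfOp x a = some w)
    (hb : idfOp x b = some w) (hab : idfCore a = idfCore b) : a = b := by
  have hh : (idfCore a).h = (idfCore b).h := by rw [hab]
  refine ext hh (funext fun l => ?_)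
  linarith [(idfOp_eq_some_iff.mp ha).2.2.2 l, (idfOp_eq_some_iff.mp hb).2.2.2 l]

theorem idfStabilize_h_of_isSome {s : IDFState L V} {l : L}
    (h : ((idfStabilize s).h l).isSome) :
    (idfStabilize s).h l = s.h l := by
  change (if 0 < s.π l then s.h l else none).isSome at h
  change (if 0 < s.π l then s.h l else none) = s.h l
  split_ifs at h ⊢
  · rfl
  · simp at h

theorem idfStabilize_eq_self_of_idfStable {s : IDFState L V} (hs : idfStable s) :
    idfStabilize s = s := by
  refine ext (funext fun l => ?_) rfl
  change (if 0 < s.π l then s.h l else none) = s.h l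
  split_ifs with hl
  · rfl
  · exact (Option.not_isSome_iff_eq_none.mp fun h => hl ((hs l).mp h)).symm

theorem idfStable_idfStabilize (s : IDFState L V) : idfStable (idfStabilize s) := fun l => by
  change (if 0 < s.π l then s.h l else none).isSome ↔ 0 < s.π l
  split_ifs with hl <;> simp [hl, s.inv l]

theorem idfStabilize_h_of_idfOp_eq_some {a b c : IDFState L V} (h : idfOp a b = some c) (l : L) :
    (idfStabilize c).h l = ((idfStabilize a).h l).or ((idfStabilize b).h l) := by
  obtain ⟨-, hag, hh, hπ⟩ := idfOp_eq_some_iff.mp h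
  change (if 0 < c.π l then c.h l else none) =
    (if 0 < a.π l then a.h l else none).or (if 0 < b.π l then b.h l else none)
  rw [hh, hπ]
  by_cases ha : 0 < a.π l
  · rw [if_pos (by linarith [b.nonneg l]), if_pos ha, Option.or_eq_left_of_isSome (a.inv l ha),
      Option.or_eq_left_of_isSome (a.inv l ha)]
  by_cases hb : 0 < b.π l
  · rw [if_pos (by linarith [a.nonneg l]), if_neg ha, if_pos hb, Option.none_or,
      (hag l).or_eq_right (b.inv l hb)]
  · rw [if_neg (by linarith [a.nonneg l, b.nonneg l]), if_neg ha, if_neg hb, Option.none_or]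

theorem idfOp_idfStabilize_eq_some {a b c : IDFState L V} (h : idfOp a b = some c) :
    idfOp (idfStabilize a) (idfStabilize b) = some (idfStabilize c) := by
  obtain ⟨hπ, hag, -, hπc⟩ := idfOp_eq_some_iff.mp h
  refine idfOp_eq_some_iff.mpr ⟨hπ, fun l ha hb => ?_, idfStabilize_h_of_idfOp_eq_some h, hπc⟩
  have ha' := idfStabilize_h_of_isSome ha
  have hb' := idfStabilize_h_of_isSome hb
  rw [ha'] at ha ⊢
  rw [hb'] at hb ⊢
  exact hag l ha hb

theorem idfOp_idfStabilize_idfCore (x : IDFState L V) :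
    idfOp (idfStabilize x) (idfCore x) = some x := by
  refine idfOp_eq_some_iff.mpr ⟨fun l => by simpa [idfStabilize, idfCore] using x.le_one l,
    fun _ hs _ => idfStabilize_h_of_isSome hs, fun l => ?_,
    fun _ => by simp [idfStabilize, idfCore]⟩
  change x.h l = (if 0 < x.π l then x.h l else none).or (x.h l)
  split_ifs
  · rw [Option.or_self]
  · rw [Option.none_or]

theorem idfOp_idfStabilize_idfCore_eq_left (b c : IDFState L V) :
    idfOp b (idfStabilize (idfCore c)) = some b :=
  idfOp_eq_some_self_of_perm_eq_zero (fun _ => rfl) fun _ h => by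
    simp [idfStabilize, idfCore] at h

end IDFState

open IDFState in
/-- the concrete state model `Σ_IDF` with the combination, core,
stability predicate and stabilization defined above forms an IDF algebra,
i.e. satisfies all IDF algebra axioms. -/
theorem sigmaIDF_isIDFAlgebra (L V : Type) :
    ∃ Alg : IDF (IDFState L V),
      Alg.op = idfOp ∧ Alg.core = idfCore ∧
      Alg.stable = idfStable ∧ Alg.stabilize = idfStabilize :=
  ⟨{ op := idfOp, core := idfCore, stable := idfStable, stabilize := idfStabilize
     comm := idfOp_comm
     assoc := idfOp_assoc
     positivity := fun _ _ _ => idfOp_self_eq_some_of_summand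
     core_self := idfOp_self_idfCore
     core_dup := idfOp_idfCore_idfCore
     core_max := fun _ _ h => ⟨_, idfOp_idfCore_of_idfOp_eq_self h⟩
     core_add := fun _ _ _ => idfOp_idfCore_eq_some
     cancel := fun _ _ _ _ => eq_of_idfOp_eq_some_of_idfCore_eq
     stable_stabilize := fun _ => idfStabilize_eq_self_of_idfStable
     stabilize_stable := idfStable_idfStabilize
     stabilize_add := fun _ _ _ => idfOp_idfStabilize_eq_some
     stabilize_core := idfOp_idfStabilize_idfCore
     stabilize_core_unit := fun _ b c h =>
       Option.some_inj.mp (h.symm.trans (idfOp_idfStabilize_idfCore_eq_left b c)) },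
    rfl, rfl, rfl, rfl⟩
end

section
/- If an assertion A is self-framing and A frames an assertion B, then the separating conjunction A * B is self-framing. -/
/-! Writing `a = stabilize a ⊕ core a`, any `a ⊕ b` differs from `stabilize a ⊕ b` only by the
core of `a`, which stabilization erases. So every state of `A * B` has the same stabilization as a
state of `{stabilize a} * B`; this assertion is self-framing because `stabilize a` is a stable
state of `A`, hence it contains every state with that stabilization. -/

namespace IDF

variable {α : Type} (Alg : IDF α)

theorem stabilize_stabilize (ω : α) : Alg.stabilize (Alg.stabilize ω) = Alg.stabilize ω :=
  Alg.stable_stabilize _ (Alg.stabilize_stable ω)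

theorem exists_op_stabilize_left {a b w : α} (h : Alg.op a b = some w) :
    ∃ ν, Alg.op (Alg.stabilize a) b = some ν ∧ Alg.stabilize ν = Alg.stabilize w := by
  have hassoc := Alg.assoc b (Alg.stabilize a) (Alg.core a)
  rw [Alg.stabilize_core a, Option.bind_some, Alg.comm b a, h] at hassoc
  obtain ⟨ν, hν, hνw⟩ := Option.bind_eq_some_iff.mp hassoc
  refine ⟨ν, by rw [Alg.comm]; exact hν, ?_⟩
  exact (Alg.stabilize_core_unit _ _ a (Alg.stabilize_add ν (Alg.core a) w hνw)).symm

theorem star_singleton_subset {A : Set α} {x : α} (hx : x ∈ A) (B : Set α) :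
    Alg.star {x} B ⊆ Alg.star A B := by
  rintro ω ⟨p, rfl, q, hq, hpq⟩
  exact ⟨p, hx, q, hq, hpq⟩

variable {Alg}

theorem selfFraming.mem_of_stabilize_eq {P : Set α} (hP : Alg.selfFraming P) {w ω : α}
    (hw : w ∈ P) (h : Alg.stabilize ω = Alg.stabilize w) : ω ∈ P :=
  (hP ω).mpr (h ▸ (hP w).mp hw)

theorem selfFraming_of_forall_stabilize_eq {P : Set α}
    (h : ∀ w ∈ P, ∀ ω, Alg.stabilize ω = Alg.stabilize w → ω ∈ P) : Alg.selfFraming P :=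
  fun ω => ⟨fun hω => h ω hω _ (Alg.stabilize_stabilize ω),
    fun hω => h _ hω ω (Alg.stabilize_stabilize ω).symm⟩

theorem mem_star_of_stabilize_eq {A B : Set α} (hA : Alg.selfFraming A)
    (hAB : Alg.framesAssert A B) {w ω : α} (hw : w ∈ Alg.star A B)
    (h : Alg.stabilize ω = Alg.stabilize w) : ω ∈ Alg.star A B := by
  obtain ⟨a, ha, b, hb, hab⟩ := hw
  have hsa : Alg.stabilize a ∈ A := (hA a).mp ha
  have hS : Alg.selfFraming (Alg.star {Alg.stabilize a} B) :=
    hAB _ hsa (Alg.stabilize_stable a)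
  obtain ⟨ν, hν, hνw⟩ := Alg.exists_op_stabilize_left hab
  have hνS : ν ∈ Alg.star {Alg.stabilize a} B := ⟨_, rfl, b, hb, hν⟩
  exact Alg.star_singleton_subset hsa B (hS.mem_of_stabilize_eq hνS (h.trans hνw.symm))

end IDF

/-- if `A` is self-framing and `A` frames `B`,
then `A * B` is self-framing. -/
theorem idf_star_selfFraming {α : Type} (Alg : IDF α) (A B : Set α)
    (hA : Alg.selfFraming A) (hAB : Alg.framesAssert A B) :
    Alg.selfFraming (Alg.star A B) :=
  IDF.selfFraming_of_forall_stabilize_eq fun _ hw _ h =>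
    IDF.mem_star_of_stabilize_eq hA hAB hw h
end

section
/- The inhale-translation-exhale pattern lemma: if (1) the front-end statement C is backward-convertible, (2) all auxiliary CoreIVL statements generated by translating C are valid w.r.t. the axiomatic semantics, and (3) the axiomatic triple Δ ⊢ [P] inhale A; π(C).1; exhale B [Q] holds, then the CSL triple ⊢CSL {P * A} C {B * Q} holds. -/
/-! CoreIVL: states, statements, operational and axiomatic semantics. -/

abbrev Var := ℕ

/-- A CoreIVL state: a variable store paired with an IDF algebra state. -/
structure PState (Val α : Type) where
  store : Var → Option Val
  st : α

namespace CoreIVL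

variable {Val α : Type}

open Classical

/-- Addition on CoreIVL states: agreement on stores, IDF addition on the algebra part. -/
noncomputable def pop (Alg : IDF α) (ω1 ω2 : PState Val α) : Option (PState Val α) :=
  if ω1.store = ω2.store then (Alg.op ω1.st ω2.st).map (fun a => ⟨ω1.store, a⟩) else none

def pstable (Alg : IDF α) (ω : PState Val α) : Prop := Alg.stable ω.st

def pstabilize (Alg : IDF α) (ω : PState Val α) : PState Val α :=
  ⟨ω.store, Alg.stabilize ω.st⟩

/-- Separating conjunction on CoreIVL assertions. -/
def pstar (Alg : IDF α) (P Q : Set (PState Val α)) : Set (PState Val α) :=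
  {ω | ∃ p ∈ P, ∃ q ∈ Q, pop Alg p q = some ω}

def pselfFraming (Alg : IDF α) (P : Set (PState Val α)) : Prop :=
  ∀ ω, ω ∈ P ↔ pstabilize Alg ω ∈ P

def pframesState (Alg : IDF α) (ω : PState Val α) (P : Set (PState Val α)) : Prop :=
  pselfFraming Alg (pstar Alg {ω} P)

/-- `x ⪰ y` on CoreIVL states. -/
def pge (Alg : IDF α) (x y : PState Val α) : Prop := ∃ r, pop Alg y r = some x

/-- Update of a local variable. -/
def pupdate (ω : PState Val α) (x : Var) (v : Val) : PState Val α :=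
  ⟨fun y => if y = x then some v else ω.store y, ω.st⟩

/-- A state is well-typed w.r.t. a type context `Δ`. -/
def wt (Δ : Var → Set Val) (ω : PState Val α) : Prop :=
  ∀ x v, ω.store x = some v → v ∈ Δ x

/-- CoreIVL statements, with semantic assertions and expressions. -/
inductive Stmt (Val α : Type) where
  | inhale (A : Set (PState Val α))
  | exhale (A : Set (PState Val α))
  | havoc (x : Var)
  | seq (C1 C2 : Stmt Val α)
  | ite (b : PState Val α → Option Bool) (C1 C2 : Stmt Val α)
  | assign (x : Var) (e : PState Val α → Option Val)
  | skip

/-- Operational (big-step, dual non-deterministic) semantics of CoreIVL: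
`red Alg Δ C ω S` means `⟨C, ω⟩ →_Δ S`. -/
inductive red (Alg : IDF α) (Δ : Var → Set Val) :
    Stmt Val α → PState Val α → Set (PState Val α) → Prop where
  | inhale {As : Set (PState Val α)} {ω} :
      pframesState Alg ω As →
      red Alg Δ (.inhale As) ω
        {ω' | ∃ ωA ∈ As, pop Alg ω ωA = some ω' ∧ pstable Alg ω'}
  | exhale {As : Set (PState Val α)} {ω ω' ωA} :
      ωA ∈ As → pop Alg ω' ωA = some ω → pstable Alg ω' →
      red Alg Δ (.exhale As) ω {ω'}
  | seq {C1 C2 ω S1} {𝒮 : PState Val α → Set (PState Val α)} :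
      red Alg Δ C1 ω S1 → (∀ ω1 ∈ S1, red Alg Δ C2 ω1 (𝒮 ω1)) →
      red Alg Δ (.seq C1 C2) ω (⋃ ω1 ∈ S1, 𝒮 ω1)
  | assign {x e ω v} :
      e ω = some v → v ∈ Δ x →
      red Alg Δ (.assign x e) ω {pupdate ω x v}
  | skip {ω} : red Alg Δ .skip ω {ω}
  | havoc {x ω} :
      red Alg Δ (.havoc x) ω {ω' | ∃ v ∈ Δ x, ω' = pupdate ω x v}
  | iteT {b C1 C2 ω S1} :
      b ω = some true → red Alg Δ C1 ω S1 → red Alg Δ (.ite b C1 C2) ω S1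
  | iteF {b C1 C2 ω S2} :
      b ω = some false → red Alg Δ C2 ω S2 → red Alg Δ (.ite b C1 C2) ω S2

/-- Axiomatic semantics of CoreIVL: `ax Alg Δ P C Q` means `Δ ⊢ [P] C [Q]`. -/
inductive ax (Alg : IDF α) (Δ : Var → Set Val) :
    Set (PState Val α) → Stmt Val α → Set (PState Val α) → Prop where
  | skip {P} : pselfFraming Alg P → ax Alg Δ P .skip P
  | inhale {P As} :
      pselfFraming Alg P →
      (∀ ω ∈ P, pstable Alg ω → pframesState Alg ω As) →
      ax Alg Δ P (.inhale As) (pstar Alg P As)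
  | exhale {P Q As} :
      pselfFraming Alg P → P ⊆ pstar Alg Q As → pselfFraming Alg Q →
      ax Alg Δ P (.exhale As) Q
  | ite {P b C1 C2 B1 B2} :
      pselfFraming Alg P → (∀ ω ∈ P, (b ω).isSome) →
      ax Alg Δ {ω | ω ∈ P ∧ b ω = some true} C1 B1 →
      ax Alg Δ {ω | ω ∈ P ∧ b ω = some false} C2 B2 →
      ax Alg Δ P (.ite b C1 C2) (B1 ∪ B2)
  | havoc {P x} :
      pselfFraming Alg P →
      ax Alg Δ P (.havoc x) {ω' | ∃ v ∈ Δ x, ∃ ω ∈ P, ω' = pupdate ω x v}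
  | seq {P C1 R C2 Q} :
      ax Alg Δ P C1 R → ax Alg Δ R C2 Q → ax Alg Δ P (.seq C1 C2) Q
  | assign {P x e} :
      pselfFraming Alg P → (∀ ω ∈ P, (e ω).isSome) →
      ax Alg Δ P (.assign x e)
        {ω' | ∃ v, pupdate ω' x v ∈ P ∧ e (pupdate ω' x v) = ω'.store x}

/-- An assertion `F` is independent of variable `x` (i.e. `x ∉ fv(F)`). -/
def indep (F : Set (PState Val α)) (x : Var) : Prop :=
  ∀ ω v, ω ∈ F ↔ pupdate ω x v ∈ F

end CoreIVL

namespace CoreIVL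

variable {Val α : Type}

theorem pop_comm (Alg : IDF α) (ω1 ω2 : PState Val α) : pop Alg ω1 ω2 = pop Alg ω2 ω1 := by
  unfold pop
  by_cases h : ω1.store = ω2.store
  · rw [if_pos h, if_pos h.symm, Alg.comm]
    cases Alg.op ω2.st ω1.st <;> simp [h]
  · rw [if_neg h, if_neg (Ne.symm h)]

theorem pstar_comm (Alg : IDF α) (P Q : Set (PState Val α)) :
    pstar Alg P Q = pstar Alg Q P := by
  ext ω
  constructor <;> rintro ⟨p, hp, q, hq, h⟩ <;> exact ⟨q, hq, p, hp, by rwa [pop_comm]⟩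

variable {Alg : IDF α} {Δ : Var → Set Val} {P Q R A : Set (PState Val α)}

theorem ax_seq_inv {C1 C2 : Stmt Val α} (h : ax Alg Δ P (.seq C1 C2) Q) :
    ∃ R, ax Alg Δ P C1 R ∧ ax Alg Δ R C2 Q := by
  cases h with
  | seq h1 h2 => exact ⟨_, h1, h2⟩

theorem ax_inhale_inv (h : ax Alg Δ P (.inhale A) R) : R = pstar Alg P A := by
  cases h
  rfl

theorem ax_exhale_inv (h : ax Alg Δ P (.exhale A) Q) : P ⊆ pstar Alg Q A := by
  cases h with
  | exhale _ hsub _ => exact hsub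

theorem ax_inhale_seq_exhale_inv {D : Stmt Val α} {B : Set (PState Val α)}
    (h : ax Alg Δ P (.seq (.inhale A) (.seq D (.exhale B))) Q) :
    ∃ R, ax Alg Δ (pstar Alg P A) D R ∧ R ⊆ pstar Alg B Q := by
  obtain ⟨R₁, hinhale, hrest⟩ := ax_seq_inv h
  obtain ⟨R, hD, hexhale⟩ := ax_seq_inv hrest
  rw [ax_inhale_inv hinhale] at hD
  exact ⟨R, hD, pstar_comm Alg Q B ▸ ax_exhale_inv hexhale⟩

end CoreIVL

open CoreIVL in
/-- the inhale-translation-exhale pattern lemma.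
`γ` is the type of front-end statements, `transl` the front-end translation
(main statement plus auxiliary statements), and `CSL` the front-end logic,
assumed to have a consequence rule. A CoreIVL statement is valid w.r.t. the
axiomatic semantics iff `∃ B, Δ ⊢ [⊤] C_v [B]`. -/
theorem inhale_translation_exhale {Val α γ : Type} (Alg : IDF α) (Δ : Var → Set Val)
    (transl : γ → Stmt Val α × Set (Stmt Val α))
    (CSL : Set (PState Val α) → γ → Set (PState Val α) → Prop)
    -- CSL has a consequence rule:
    (hcons : ∀ (P P' : Set (PState Val α)) (C : γ) (Q Q' : Set (PState Val α)),
      CSL P' C Q' → P ⊆ P' → Q' ⊆ Q → CSL P C Q)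
    (C : γ) (P Q A B : Set (PState Val α))
    -- (1) C is backward-convertible:
    (hconv : ∀ P' Q' : Set (PState Val α),
      (∀ Cv ∈ (transl C).2, ∃ B', ax Alg Δ {ω | wt Δ ω} Cv B') →
      ax Alg Δ P' (transl C).1 Q' → CSL P' C Q')
    -- (2) all auxiliary statements are valid w.r.t. the axiomatic semantics:
    (haux : ∀ Cv ∈ (transl C).2, ∃ B', ax Alg Δ {ω | wt Δ ω} Cv B')
    -- (3) the axiomatic triple for inhale A; transl(C).1; exhale B:
    (hax : ax Alg Δ P (.seq (.inhale A) (.seq (transl C).1 (.exhale B))) Q) :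
    CSL (pstar Alg P A) C (pstar Alg B Q) := by
  obtain ⟨R, hD, hR⟩ := ax_inhale_seq_exhale_inv hax
  exact hcons _ _ _ _ _ (hconv _ _ haux hD) Set.Subset.rfl hR
end
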